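/- For the star graph S_n = K_{n−1,1} on n ≥ 2 vertices: if n is even then a(S_n; x) = x·a(K_{n−1}; x), and if n is odd then a(S_n; x) = x·a(K_{n−1}; x) + C(n−1, (n−1)/2) x^{(n+1)/2}. Equivalently, a nonempty set S of vertices of S_n is a strong defensive alliance with connected induced subgraph if and only if S contains the center and |S| − 1 ≥ ⌈(n−1)/2⌉, so a_k(S_n) = C(n−1, k−1) for k ≥ ⌈(n−1)/2⌉ + 1 and a_k(S_n) = 0 otherwise. -/

import Mathlib

open SimpleGraph Polynomial Finset

/-- `δ_S(v)`: the number of neighbors of `v` lying in the set `S`. -/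
noncomputable def degIn {V : Type*} (G : SimpleGraph V) (S : Finset V) (v : V) : ℕ :=
  ((S : Set V) ∩ G.neighborSet v).ncard

/-- `δ(v)`: the degree of `v` in `G`. -/
noncomputable def degOf {V : Type*} (G : SimpleGraph V) (v : V) : ℕ :=
  (G.neighborSet v).ncard

/-- `S` is a strong defensive alliance in `G`: `S` is nonempty and every `v ∈ S`
satisfies `2·δ_S(v) ≥ δ(v)`. -/
def IsStrongAlliance {V : Type*} (G : SimpleGraph V) (S : Finset V) : Prop :=
  S.Nonempty ∧ ∀ v ∈ S, degOf G v ≤ 2 * degIn G S v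

/-- The alliances counted by the strong alliance polynomial: strong defensive alliances
whose induced subgraph is connected. -/
def IsCountedAlliance {V : Type*} (G : SimpleGraph V) (S : Finset V) : Prop :=
  IsStrongAlliance G S ∧ (G.induce (S : Set V)).Connected

/-- `a_k(G)`: the number of strong defensive alliances of cardinality `k` in `G`
whose induced subgraph is connected. -/
noncomputable def aCoeff {V : Type*} (G : SimpleGraph V) (k : ℕ) : ℕ :=
  {S : Finset V | S.card = k ∧ IsCountedAlliance G S}.ncard

/-- The strong alliance polynomial `a(G;x) = Σ_k a_k(G) x^k`. -/
noncomputable def alliancePoly {V : Type*} [Fintype V] (G : SimpleGraph V) : Polynomial ℤ :=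
  ∑ k ∈ Finset.range (Fintype.card V + 1), Polynomial.C (aCoeff G k : ℤ) * Polynomial.X ^ k

/-- The star graph `S_n` on `n` vertices, modelled as the complete bipartite graph
`K_{n-1,1}`; its center is the unique right-hand vertex `Sum.inr 0`. -/
def starGraph (n : ℕ) : SimpleGraph (Fin (n - 1) ⊕ Fin 1) :=
  completeBipartiteGraph (Fin (n - 1)) (Fin 1)

-- counting lemmas
lemma count1 {V : Type*} [Fintype V] [DecidableEq V] (k : ℕ) :
    {S : Finset V | S.card = k}.ncard = (Fintype.card V).choose k := by
  classical
  rw [Set.ncard_eq_toFinset_card']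
  rw [show {S : Finset V | S.card = k}.toFinset = Finset.powersetCard k Finset.univ by
    ext S; simp [Finset.mem_powersetCard]]
  simp [Finset.card_powersetCard]

lemma count2 {V : Type*} [Fintype V] [DecidableEq V] (a : V) (k : ℕ) :
    {S : Finset V | S.card = k + 1 ∧ a ∈ S}.ncard = (Fintype.card V - 1).choose k := by
  classical
  rw [Set.ncard_eq_toFinset_card']
  have : {S : Finset V | S.card = k + 1 ∧ a ∈ S}.toFinset.card
      = (Finset.powersetCard k (Finset.univ.erase a)).card := by
    apply Finset.card_bij (fun S _ => S.erase a)
    · intro S hS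
      simp only [Set.mem_toFinset, Set.mem_setOf_eq] at hS
      simp [Finset.mem_powersetCard, Finset.card_erase_of_mem hS.2, hS.1]
      exact fun x hx => by simp [Finset.erase_subset_erase a (Finset.subset_univ S) hx]
    · intro S hS T hT h
      simp only [Set.mem_toFinset, Set.mem_setOf_eq] at hS hT
      have := congrArg (insert a) h
      rwa [Finset.insert_erase hS.2, Finset.insert_erase hT.2] at this
    · intro T hT
      simp only [Finset.mem_powersetCard] at hT
      refine ⟨insert a T, ?_, ?_⟩
      · simp only [Set.mem_toFinset, Set.mem_setOf_eq]
        constructor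
        · rw [Finset.card_insert_of_notMem, hT.2]
          intro ha; exact (Finset.mem_erase.mp (hT.1 ha)).1 rfl
        · exact Finset.mem_insert_self a T
      · rw [Finset.erase_insert]
        intro ha; exact (Finset.mem_erase.mp (hT.1 ha)).1 rfl
  rw [this, Finset.card_powersetCard, Finset.card_erase_of_mem (Finset.mem_univ a),
    Finset.card_univ]

variable {n : ℕ}

lemma star_nbhd_inl (i : Fin (n-1)) :
    (_root_.starGraph n).neighborSet (Sum.inl i) = {Sum.inr 0} := by
  ext w
  cases w with
  | inl j => simp [_root_.starGraph, neighborSet]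
  | inr j => simp [_root_.starGraph, neighborSet, Subsingleton.elim j 0]

lemma star_nbhd_inr (j : Fin 1) :
    (_root_.starGraph n).neighborSet (Sum.inr j) = Set.range Sum.inl := by
  ext w
  cases w with
  | inl i => simp [_root_.starGraph, neighborSet]
  | inr j' => simp [_root_.starGraph, neighborSet]

lemma degOf_inl (i : Fin (n-1)) : degOf (_root_.starGraph n) (Sum.inl i) = 1 := by
  rw [degOf, star_nbhd_inl, Set.ncard_singleton]

lemma degOf_inr (j : Fin 1) : degOf (_root_.starGraph n) (Sum.inr j) = n - 1 := by
  rw [degOf, star_nbhd_inr, ← Set.image_univ,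
    Set.ncard_image_of_injective _ Sum.inl_injective]
  simp [Set.ncard_univ]

lemma degIn_inl (S : Finset (Fin (n-1) ⊕ Fin 1)) (i : Fin (n-1)) :
    degIn (_root_.starGraph n) S (Sum.inl i) = if Sum.inr 0 ∈ S then 1 else 0 := by
  rw [degIn, star_nbhd_inl]
  split_ifs with h
  · rw [Set.inter_eq_self_of_subset_right (by simpa using h), Set.ncard_singleton]
  · rw [Set.inter_singleton_eq_empty.mpr (by simpa using h), Set.ncard_empty]

lemma degIn_inr [DecidableEq (Fin (n-1) ⊕ Fin 1)] (S : Finset (Fin (n-1) ⊕ Fin 1)) (j : Fin 1) :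
    degIn (_root_.starGraph n) S (Sum.inr j) = (S.erase (Sum.inr 0)).card := by
  rw [degIn, star_nbhd_inr]
  have h : (S : Set (Fin (n-1) ⊕ Fin 1)) ∩ Set.range Sum.inl
      = ((S.erase (Sum.inr 0) : Finset (Fin (n-1) ⊕ Fin 1)) : Set (Fin (n-1) ⊕ Fin 1)) := by
    ext w
    cases w with
    | inl i => simp
    | inr j' => simp [Subsingleton.elim j' 0]
  rw [h, Set.ncard_coe_finset]

lemma star_connected_of_center (S : Finset (Fin (n-1) ⊕ Fin 1)) (h : Sum.inr 0 ∈ S) :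
    ((_root_.starGraph n).induce (S : Set _)).Connected := by
  rw [SimpleGraph.connected_iff]
  refine ⟨?_, ⟨⟨Sum.inr 0, by simpa using h⟩⟩⟩
  have key : ∀ u : (S : Set (Fin (n-1) ⊕ Fin 1)),
      ((_root_.starGraph n).induce (S : Set _)).Reachable u ⟨Sum.inr 0, by simpa using h⟩ := by
    rintro ⟨u, hu⟩
    cases u with
    | inl i =>
      apply SimpleGraph.Adj.reachable
      exact Or.inl ⟨rfl, rfl⟩
    | inr j =>
      obtain rfl : j = 0 := Subsingleton.elim j 0
      exact SimpleGraph.Reachable.refl _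
  intro u v
  exact (key u).trans (key v).symm

lemma star_counted_iff' (hn : 2 ≤ n) (S : Finset (Fin (n-1) ⊕ Fin 1)) :
    IsCountedAlliance (_root_.starGraph n) S ↔
      Sum.inr 0 ∈ S ∧ n - 1 ≤ 2 * (S.card - 1) := by
  classical
  constructor
  · rintro ⟨⟨⟨v, hv⟩, hall⟩, -⟩
    have hc : Sum.inr 0 ∈ S := by
      cases v with
      | inl i =>
        have := hall _ hv
        rw [degOf_inl, degIn_inl] at this
        by_contra h
        simp [h] at this
      | inr j => rwa [Subsingleton.elim (0 : Fin 1) j]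
    refine ⟨hc, ?_⟩
    have := hall _ hc
    rw [degOf_inr, degIn_inr, Finset.card_erase_of_mem hc] at this
    exact this
  · rintro ⟨hc, hcard⟩
    refine ⟨⟨⟨_, hc⟩, ?_⟩, star_connected_of_center S hc⟩
    intro v hv
    cases v with
    | inl i =>
      rw [degOf_inl, degIn_inl, if_pos hc]
      omega
    | inr j =>
      rw [degOf_inr, degIn_inr, Finset.card_erase_of_mem (by rwa [Subsingleton.elim (0 : Fin 1) j])]
      omega

section Complete
variable {W : Type*} [Fintype W] [DecidableEq W]

lemma top_nbhd (v : W) : (⊤ : SimpleGraph W).neighborSet v = {v}ᶜ := by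
  ext w; simp [SimpleGraph.neighborSet, ne_comm, eq_comm]

lemma degOf_top (v : W) : degOf (⊤ : SimpleGraph W) v = Fintype.card W - 1 := by
  rw [degOf, top_nbhd, Set.ncard_eq_toFinset_card']
  simp [Finset.card_compl]

lemma degIn_top (S : Finset W) (v : W) :
    degIn (⊤ : SimpleGraph W) S v = (S.erase v).card := by
  rw [degIn, top_nbhd]
  have h : (S : Set W) ∩ {v}ᶜ = ((S.erase v : Finset W) : Set W) := by
    ext w; simp [and_comm]
  rw [h, Set.ncard_coe_finset]

lemma top_connected (S : Finset W) (hS : S.Nonempty) :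
    ((⊤ : SimpleGraph W).induce (S : Set W)).Connected := by
  rw [SimpleGraph.connected_iff]
  obtain ⟨x, hx⟩ := hS
  refine ⟨?_, ⟨⟨x, by simpa using hx⟩⟩⟩
  intro u v
  by_cases h : u = v
  · rw [h]
  · exact SimpleGraph.Adj.reachable (by exact fun hc => h (Subtype.ext hc))

lemma top_counted_iff (S : Finset W) :
    IsCountedAlliance (⊤ : SimpleGraph W) S ↔
      S.Nonempty ∧ Fintype.card W - 1 ≤ 2 * (S.card - 1) := by
  constructor
  · rintro ⟨⟨hne, hall⟩, -⟩
    obtain ⟨v, hv⟩ := hne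
    have := hall v hv
    rw [degOf_top, degIn_top, Finset.card_erase_of_mem hv] at this
    exact ⟨⟨v, hv⟩, this⟩
  · rintro ⟨hne, hcard⟩
    refine ⟨⟨hne, ?_⟩, top_connected S hne⟩
    intro v hv
    rw [degOf_top, degIn_top, Finset.card_erase_of_mem hv]
    exact hcard

end Complete

lemma aCoeff_zero_of_lt {V : Type*} [Fintype V] (G : SimpleGraph V) (j : ℕ)
    (h : Fintype.card V < j) : aCoeff G j = 0 := by
  rw [aCoeff, Set.ncard_eq_zero (Set.toFinite _)]
  ext S
  simp only [Set.mem_setOf_eq, Set.mem_empty_iff_false, iff_false, not_and]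
  intro hS _
  have := Finset.card_le_univ S
  omega

lemma coeff_alliancePoly {V : Type*} [Fintype V] (G : SimpleGraph V) (j : ℕ) :
    (alliancePoly G).coeff j = (aCoeff G j : ℤ) := by
  classical
  rw [alliancePoly, Polynomial.finset_sum_coeff]
  simp only [Polynomial.coeff_C_mul, Polynomial.coeff_X_pow, mul_ite, mul_one, mul_zero]
  rw [Finset.sum_ite_eq (Finset.range _) j (fun k => ((aCoeff G k : ℤ)))]
  split_ifs with h
  · rfl
  · rw [aCoeff_zero_of_lt G j (by simp at h; omega)]
    simp

lemma aCoeff_star_zero (hn : 2 ≤ n) : aCoeff (_root_.starGraph n) 0 = 0 := by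
  rw [aCoeff, Set.ncard_eq_zero (Set.toFinite _)]
  ext S
  simp only [Set.mem_setOf_eq, Set.mem_empty_iff_false, iff_false, not_and]
  intro hS hC
  obtain ⟨⟨⟨v, hv⟩, -⟩, -⟩ := hC
  simp [Finset.card_eq_zero.mp hS] at hv

lemma aCoeff_star_succ (hn : 2 ≤ n) (j : ℕ) :
    aCoeff (_root_.starGraph n) (j + 1) = if n - 1 ≤ 2 * j then (n - 1).choose j else 0 := by
  classical
  rw [aCoeff]
  split_ifs with h
  · rw [show {S : Finset (Fin (n-1) ⊕ Fin 1) | S.card = j + 1 ∧ IsCountedAlliance (_root_.starGraph n) S}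
        = {S : Finset (Fin (n-1) ⊕ Fin 1) | S.card = j + 1 ∧ Sum.inr 0 ∈ S} by
      ext S
      simp only [Set.mem_setOf_eq, and_congr_right_iff]
      intro hcard
      rw [star_counted_iff' hn]
      constructor
      · exact fun h' => h'.1
      · exact fun h' => ⟨h', by omega⟩]
    rw [count2]
    congr 1
    simp
  · rw [Set.ncard_eq_zero (Set.toFinite _)]
    ext S
    simp only [Set.mem_setOf_eq, Set.mem_empty_iff_false, iff_false, not_and]
    intro hcard hC
    rw [star_counted_iff' hn] at hC
    omega

lemma aCoeff_top (hn : 2 ≤ n) (j : ℕ) :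
    aCoeff (⊤ : SimpleGraph (Fin (n-1))) j = if n ≤ 2 * j then (n - 1).choose j else 0 := by
  classical
  rw [aCoeff]
  split_ifs with h
  · rw [show {S : Finset (Fin (n-1)) | S.card = j ∧ IsCountedAlliance ⊤ S}
        = {S : Finset (Fin (n-1)) | S.card = j} by
      ext S
      simp only [Set.mem_setOf_eq, and_iff_left_iff_imp]
      intro hcard
      rw [top_counted_iff]
      refine ⟨Finset.card_pos.mp (by omega), ?_⟩
      simp only [Fintype.card_fin]
      omega]
    rw [count1]
    congr 1
    simp
  · rw [Set.ncard_eq_zero (Set.toFinite _)]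
    ext S
    simp only [Set.mem_setOf_eq, Set.mem_empty_iff_false, iff_false, not_and]
    intro hcard hC
    rw [top_counted_iff] at hC
    obtain ⟨hne, hc⟩ := hC
    have := Finset.card_pos.mpr hne
    simp only [Fintype.card_fin] at hc
    omega



/-- For the star graph `S_n = K_{n−1,1}` on `n ≥ 2` vertices:
`a(S_n;x) = x·a(K_{n−1};x)` if `n` is even, and
`a(S_n;x) = x·a(K_{n−1};x) + C(n−1,(n−1)/2) x^{(n+1)/2}` if `n` is odd.  Equivalently, a
nonempty vertex set `S` is a strong defensive alliance with connected induced subgraph iff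
`S` contains the center and `|S| − 1 ≥ ⌈(n−1)/2⌉`, so `a_k(S_n) = C(n−1,k−1)` for
`k ≥ ⌈(n−1)/2⌉ + 1` and `a_k(S_n) = 0` otherwise.  (Here `⌈(n−1)/2⌉ = n/2` in ℕ-division
since `n ≥ 2`.) -/
theorem stmt_14 (n : ℕ) (hn : 2 ≤ n) :
    (Even n → alliancePoly (_root_.starGraph n) =
      Polynomial.X * alliancePoly (⊤ : SimpleGraph (Fin (n - 1)))) ∧
    (Odd n → alliancePoly (_root_.starGraph n) =
      Polynomial.X * alliancePoly (⊤ : SimpleGraph (Fin (n - 1))) +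
        Polynomial.C (((n - 1).choose ((n - 1) / 2) : ℕ) : ℤ)
          * Polynomial.X ^ ((n + 1) / 2)) ∧
    (∀ S : Finset (Fin (n - 1) ⊕ Fin 1), S.Nonempty →
      (IsCountedAlliance (_root_.starGraph n) S ↔
        Sum.inr 0 ∈ S ∧ n / 2 ≤ S.card - 1)) ∧
    (∀ k : ℕ, n / 2 + 1 ≤ k → aCoeff (_root_.starGraph n) k = (n - 1).choose (k - 1)) ∧
    (∀ k : ℕ, k < n / 2 + 1 → aCoeff (_root_.starGraph n) k = 0) := by
  refine ⟨?_, ?_, ?_, ?_, ?_⟩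
  · intro he
    rw [Nat.even_iff] at he
    ext j
    rw [coeff_alliancePoly]
    cases j with
    | zero =>
      rw [Polynomial.mul_coeff_zero, Polynomial.coeff_X_zero, zero_mul, aCoeff_star_zero hn]
      simp
    | succ j =>
      rw [Polynomial.coeff_X_mul, coeff_alliancePoly, aCoeff_star_succ hn, aCoeff_top hn]
      split_ifs with h1 h2 <;> first | rfl | omega
  · intro ho
    rw [Nat.odd_iff] at ho
    ext j
    rw [Polynomial.coeff_add, coeff_alliancePoly]
    cases j with
    | zero =>
      rw [Polynomial.mul_coeff_zero, Polynomial.coeff_X_zero, zero_mul,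
        Polynomial.coeff_C_mul, Polynomial.coeff_X_pow, aCoeff_star_zero hn,
        if_neg (by omega)]
      simp
    | succ j =>
      rw [Polynomial.coeff_X_mul, coeff_alliancePoly, aCoeff_star_succ hn, aCoeff_top hn,
        Polynomial.coeff_C_mul, Polynomial.coeff_X_pow]
      split_ifs with h1 h2 h3
      · exfalso; omega
      · push_cast; ring
      · obtain rfl : j = (n - 1) / 2 := by omega
        push_cast
        ring
      · exfalso; omega
      · exfalso; omega
      · exfalso; omega
      · exfalso; omega
      · push_cast; ring
  · intro S hS
    rw [star_counted_iff' hn]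
    have h1 : 1 ≤ S.card := hS.card_pos
    exact and_congr_right fun _ => by omega
  · intro k hk
    obtain ⟨j, rfl⟩ : ∃ j, k = j + 1 := ⟨k - 1, by omega⟩
    rw [aCoeff_star_succ hn, if_pos (by omega)]
    simp
  · intro k hk
    cases k with
    | zero => exact aCoeff_star_zero hn
    | succ j => rw [aCoeff_star_succ hn, if_neg (by omega)]
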